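/- Let f be analytic on the open unit disk D = {z ∈ ℂ : |z| < 1} with |f(z)| < 1 for all z ∈ D, and write f(z) = ∑_{k=0}^∞ a_k z^k. Let t and p be real numbers with 0 < t < 1 and 0 < p ≤ 1. Define R_{t,p} = (1 − t + tp − 2√((1 − t)(tp + 1 − t)))/(tp − 3 + 3t) if t ≠ 3/(p + 3), and R_{t,p} = 1/2 if t = 3/(p + 3). Then for every z ∈ D with |z| = r ≤ R_{t,p}, one has t |f(z)|^p + (1 − t) ∑_{k=0}^∞ |a_k| r^k ≤ 1. -/

import Mathlib

/-!
By the Schwarz–Pick lemma, `|f z| ≤ (α + r) / (1 + α r)` with `α = |a₀|`, and Wiener's inequality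
`|aₖ| ≤ 1 - α²` bounds the majorant series by `α + (1 - α²) r / (1 - r)`. Wiener's inequality is
the Schwarz–Pick bound for the derivative at `0`, applied to `w ↦ ∑ₙ a_{nk} wⁿ`: at `w = zᵏ` this
is the average of `f` over the rotations of `z` by the `k`-th roots of unity, so it maps the disk
into itself. After Bernoulli's inequality `xᵖ ≤ 1 - p + p x`, the claim reduces to
`0 ≤ t p (1 - r)² + (1 - t)(1 - (2 + α) r)(1 + α r)`, whose worst case `α = 1` is the quadratic
with smallest positive root `R_{t,p}`.
-/

open Metric Set ComplexConjugate

section PowerSeries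

variable {a : ℕ → ℂ} {f : ℂ → ℂ}

theorem hasFPowerSeriesOnBall_ofScalars_of_hasSum
    (hf : ∀ z ∈ ball (0 : ℂ) 1, HasSum (fun n ↦ a n * z ^ n) (f z)) :
    HasFPowerSeriesOnBall f (.ofScalars ℂ a) 0 1 where
  r_le := by
    refine ENNReal.le_of_forall_nnreal_lt fun s hs ↦ ?_
    have hs1 : (s : ℝ) < 1 := by exact_mod_cast hs
    refine FormalMultilinearSeries.le_radius_of_summable_norm _ ?_
    have hmem : ((s : ℝ) : ℂ) ∈ ball (0 : ℂ) 1 := by simpa [abs_of_nonneg s.2] using hs1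
    refine ((hf _ hmem).summable.norm).congr fun n ↦ ?_
    simp
  r_pos := one_pos
  hasSum {y} hy := by
    rw [← ENNReal.ofReal_one, eball_ofReal] at hy
    simpa [FormalMultilinearSeries.ofScalars_apply_eq, mul_comm] using hf y hy

theorem apply_zero_eq_of_hasSum
    (hf : ∀ z ∈ ball (0 : ℂ) 1, HasSum (fun n ↦ a n * z ^ n) (f z)) : f 0 = a 0 :=
  (hf 0 (mem_ball_self one_pos)).unique <| by
    simpa using hasSum_single (f := fun n ↦ a n * 0 ^ n) 0 fun n hn ↦ by simp [hn]

theorem differentiableOn_of_hasSum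
    (hf : ∀ z ∈ ball (0 : ℂ) 1, HasSum (fun n ↦ a n * z ^ n) (f z)) :
    DifferentiableOn ℂ f (ball 0 1) := by
  simpa [← ENNReal.ofReal_one, eball_ofReal] using
    (hasFPowerSeriesOnBall_ofScalars_of_hasSum hf).differentiableOn

theorem deriv_zero_eq_of_hasSum
    (hf : ∀ z ∈ ball (0 : ℂ) 1, HasSum (fun n ↦ a n * z ^ n) (f z)) : deriv f 0 = a 1 := by
  simpa [FormalMultilinearSeries.ofScalars_apply_eq] using
    (hasFPowerSeriesOnBall_ofScalars_of_hasSum hf).hasFPowerSeriesAt.deriv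

theorem summable_norm_mul_pow_of_hasSum
    (hf : ∀ z ∈ ball (0 : ℂ) 1, HasSum (fun n ↦ a n * z ^ n) (f z)) {r : ℝ} (hr0 : 0 ≤ r)
    (hr1 : r < 1) : Summable fun n ↦ ‖a n‖ * r ^ n := by
  have hmem : (r : ℂ) ∈ ball (0 : ℂ) 1 := by simpa [abs_of_nonneg hr0] using hr1
  simpa [abs_of_nonneg hr0] using (hf _ hmem).summable.norm

end PowerSeries

section Blaschke

noncomputable def blaschkeFactor (c w : ℂ) : ℂ := (w - c) / (1 - conj c * w)

theorem sq_norm_one_sub_conj_mul_sub_sq_norm_sub (c w : ℂ) :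
    ‖1 - conj c * w‖ ^ 2 - ‖w - c‖ ^ 2 = (1 - ‖c‖ ^ 2) * (1 - ‖w‖ ^ 2) := by
  simp only [Complex.sq_norm, Complex.normSq_apply, Complex.sub_re, Complex.sub_im,
    Complex.mul_re, Complex.mul_im, Complex.conj_re, Complex.conj_im, Complex.one_re,
    Complex.one_im]
  ring

variable {c w : ℂ}

theorem one_sub_conj_mul_ne_zero (hc : ‖c‖ < 1) (hw : ‖w‖ ≤ 1) : 1 - conj c * w ≠ 0 := by
  refine sub_ne_zero.mpr fun h ↦ ?_
  have : ‖conj c * w‖ < 1 := by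
    rw [norm_mul, Complex.norm_conj]
    nlinarith [norm_nonneg c, norm_nonneg w]
  simp [← h] at this

theorem norm_blaschkeFactor_lt_one (hc : ‖c‖ < 1) (hw : ‖w‖ < 1) :
    ‖blaschkeFactor c w‖ < 1 := by
  have hd := norm_pos_iff.mpr (one_sub_conj_mul_ne_zero hc hw.le)
  rw [blaschkeFactor, norm_div, div_lt_one hd, ← sq_lt_sq₀ (norm_nonneg _) hd.le, ← sub_pos,
    sq_norm_one_sub_conj_mul_sub_sq_norm_sub]
  have := norm_nonneg c
  have := norm_nonneg w
  exact mul_pos (by nlinarith) (by nlinarith)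

theorem norm_blaschkeFactor_le (hc : ‖c‖ < 1) (hw : ‖w‖ < 1) :
    ‖blaschkeFactor c w‖ ≤ (‖c‖ + ‖w‖) / (1 + ‖c‖ * ‖w‖) := by
  have hd := norm_pos_iff.mpr (one_sub_conj_mul_ne_zero hc hw.le)
  have hd_le : ‖1 - conj c * w‖ ≤ 1 + ‖c‖ * ‖w‖ := by
    simpa using norm_sub_le (1 : ℂ) (conj c * w)
  have hK : 0 ≤ (1 - ‖c‖ ^ 2) * (1 - ‖w‖ ^ 2) := by
    have := norm_nonneg c
    have := norm_nonneg w
    exact mul_nonneg (by nlinarith) (by nlinarith)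
  have hid := sq_norm_one_sub_conj_mul_sub_sq_norm_sub c w
  rw [blaschkeFactor, norm_div, div_le_div_iff₀ hd (by positivity),
    ← pow_le_pow_iff_left₀ (by positivity) (by positivity) two_ne_zero]
  -- `(1 + |c||w|)² - (|c| + |w|)² = (1 - |c|²)(1 - |w|²)`
  nlinarith [mul_le_mul_of_nonneg_left (pow_le_pow_left₀ hd.le hd_le 2) hK]

theorem blaschkeFactor_neg_blaschkeFactor (hc : ‖c‖ < 1) (hw : ‖w‖ ≤ 1) :
    blaschkeFactor (-c) (blaschkeFactor c w) = w := by
  have hd := one_sub_conj_mul_ne_zero hc hw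
  have hd' : 1 - w * conj c ≠ 0 := by rwa [mul_comm]
  have hsum : blaschkeFactor c w - -c = w * (1 - conj c * c) / (1 - conj c * w) := by
    rw [blaschkeFactor]
    field_simp
    ring
  have hden : 1 - conj (-c) * blaschkeFactor c w = (1 - conj c * c) / (1 - conj c * w) := by
    rw [blaschkeFactor, map_neg]
    field_simp
    ring
  have hc' : (1 : ℂ) - conj c * c ≠ 0 := one_sub_conj_mul_ne_zero hc hc.le
  rw [blaschkeFactor, hsum, hden]
  field_simp

theorem hasDerivAt_blaschkeFactor_self (hc : ‖c‖ < 1) :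
    HasDerivAt (blaschkeFactor c) (((1 - ‖c‖ ^ 2 : ℝ) : ℂ)⁻¹) c := by
  have hc' : (1 : ℂ) - conj c * c ≠ 0 := one_sub_conj_mul_ne_zero hc hc.le
  have := ((hasDerivAt_id c).sub_const c).div
    (((hasDerivAt_id c).const_mul (conj c)).const_sub 1) hc'
  refine this.congr_deriv ?_
  push_cast
  rw [← Complex.conj_mul']
  simp only [id, sub_self, zero_mul, sub_zero, one_mul]
  field_simp

theorem mapsTo_blaschkeFactor (hc : ‖c‖ < 1) :
    MapsTo (blaschkeFactor c) (ball 0 1) (ball 0 1) := fun _ hw ↦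
  mem_ball_zero_iff.mpr (norm_blaschkeFactor_lt_one hc (mem_ball_zero_iff.mp hw))

theorem differentiableOn_blaschkeFactor (hc : ‖c‖ < 1) :
    DifferentiableOn ℂ (blaschkeFactor c) (ball 0 1) := fun _ hw ↦
  ((differentiableAt_id.sub_const c).div (differentiableAt_id.const_mul _ |>.const_sub 1)
    (one_sub_conj_mul_ne_zero hc (mem_ball_zero_iff.mp hw).le)).differentiableWithinAt

end Blaschke

section SchwarzPick

variable {g : ℂ → ℂ}

theorem div_one_add_mul_le_div_one_add_mul {α s r : ℝ} (hα0 : 0 ≤ α) (hα1 : α ≤ 1)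
    (hs : 0 ≤ s) (hsr : s ≤ r) : (α + s) / (1 + α * s) ≤ (α + r) / (1 + α * r) := by
  rw [div_le_div_iff₀ (by positivity) (by nlinarith)]
  nlinarith [mul_nonneg (sub_nonneg.mpr hsr) (by nlinarith : 0 ≤ 1 - α ^ 2)]

theorem norm_le_of_mapsTo_ball_one (hd : DifferentiableOn ℂ g (ball 0 1))
    (hmaps : MapsTo g (ball 0 1) (ball 0 1)) {z : ℂ} (hz : ‖z‖ < 1) :
    ‖g z‖ ≤ (‖g 0‖ + ‖z‖) / (1 + ‖g 0‖ * ‖z‖) := by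
  have hc : ‖g 0‖ < 1 := mem_ball_zero_iff.mp (hmaps (mem_ball_self one_pos))
  have hgz : ‖g z‖ < 1 := mem_ball_zero_iff.mp (hmaps (mem_ball_zero_iff.mpr hz))
  set h := blaschkeFactor (g 0) ∘ g
  have hh0 : h 0 = 0 := by simp [h, blaschkeFactor]
  have hhd : DifferentiableOn ℂ h (ball 0 1) :=
    (differentiableOn_blaschkeFactor hc).comp hd hmaps
  have hhmaps : MapsTo h (ball 0 1) (closedBall 0 1) :=
    ((mapsTo_blaschkeFactor hc).comp hmaps).mono_right ball_subset_closedBall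
  have hschwarz : ‖h z‖ ≤ ‖z‖ := Complex.norm_le_norm_of_mapsTo_ball hhd hhmaps hh0 hz
  have hhz : ‖h z‖ < 1 := hschwarz.trans_lt hz
  calc ‖g z‖ = ‖blaschkeFactor (-g 0) (h z)‖ := by
        rw [show h z = blaschkeFactor (g 0) (g z) from rfl,
          blaschkeFactor_neg_blaschkeFactor hc hgz.le]
    _ ≤ (‖g 0‖ + ‖h z‖) / (1 + ‖g 0‖ * ‖h z‖) := by
        simpa using norm_blaschkeFactor_le (c := -g 0) (by simpa using hc) hhz
    _ ≤ (‖g 0‖ + ‖z‖) / (1 + ‖g 0‖ * ‖z‖) :=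
        div_one_add_mul_le_div_one_add_mul (norm_nonneg _) hc.le (norm_nonneg _) hschwarz

theorem norm_deriv_zero_le_of_mapsTo_ball_one (hd : DifferentiableOn ℂ g (ball 0 1))
    (hmaps : MapsTo g (ball 0 1) (ball 0 1)) : ‖deriv g 0‖ ≤ 1 - ‖g 0‖ ^ 2 := by
  have hc : ‖g 0‖ < 1 := mem_ball_zero_iff.mp (hmaps (mem_ball_self one_pos))
  set h := blaschkeFactor (g 0) ∘ g
  have hhd : DifferentiableOn ℂ h (ball 0 1) :=
    (differentiableOn_blaschkeFactor hc).comp hd hmaps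
  have hh0 : h 0 = 0 := by simp [h, blaschkeFactor]
  have hhmaps : MapsTo h (ball 0 1) (closedBall (h 0) 1) := by
    rw [hh0]
    exact ((mapsTo_blaschkeFactor hc).comp hmaps).mono_right ball_subset_closedBall
  have hderiv : deriv h 0 = ((1 - ‖g 0‖ ^ 2 : ℝ) : ℂ)⁻¹ * deriv g 0 :=
    ((hasDerivAt_blaschkeFactor_self hc).comp 0
      (hd.differentiableAt (ball_mem_nhds 0 one_pos)).hasDerivAt).deriv
  have hpos : 0 < 1 - ‖g 0‖ ^ 2 := by nlinarith [norm_nonneg (g 0)]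
  have := Complex.norm_deriv_le_one_of_mapsTo_ball hhd hhmaps one_pos
  rwa [hderiv, norm_mul, norm_inv, Complex.norm_real, Real.norm_of_nonneg hpos.le,
    inv_mul_le_iff₀ hpos, mul_one] at this

end SchwarzPick

theorem IsPrimitiveRoot.geom_sum_pow_eq_ite {R : Type*} [CommRing R] [IsDomain R] {ζ : R}
    {k : ℕ} (hζ : IsPrimitiveRoot ζ k) (m : ℕ) :
    ∑ j ∈ Finset.range k, (ζ ^ m) ^ j = if k ∣ m then (k : R) else 0 := by
  split_ifs with hdvd
  · simp [(hζ.pow_eq_one_iff_dvd m).mpr hdvd]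
  · have hne : ζ ^ m - 1 ≠ 0 := sub_ne_zero.mpr fun h ↦ hdvd ((hζ.pow_eq_one_iff_dvd m).mp h)
    have := geom_sum_mul (ζ ^ m) k
    rw [← pow_mul, mul_comm m k, pow_mul, hζ.pow_eq_one, one_pow, sub_self] at this
    exact (mul_eq_zero.mp this).resolve_right hne

section Wiener

variable {a : ℕ → ℂ} {f : ℂ → ℂ}

theorem hasSum_average_rotations_of_isPrimitiveRoot
    (hf : ∀ z ∈ ball (0 : ℂ) 1, HasSum (fun n ↦ a n * z ^ n) (f z)) {k : ℕ} (hk : k ≠ 0)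
    {ζ : ℂ} (hζ : IsPrimitiveRoot ζ k) {z : ℂ} (hz : z ∈ ball (0 : ℂ) 1) :
    HasSum (fun n ↦ a (n * k) * (z ^ k) ^ n) ((∑ j ∈ Finset.range k, f (ζ ^ j * z)) / k) := by
  have hrot (j : ℕ) : ζ ^ j * z ∈ ball (0 : ℂ) 1 := by
    simpa [hζ.norm'_eq_one hk] using hz
  have hterm (m : ℕ) : (∑ j ∈ Finset.range k, a m * (ζ ^ j * z) ^ m) / k
      = if k ∣ m then a m * z ^ m else 0 := by
    have : ∑ j ∈ Finset.range k, a m * (ζ ^ j * z) ^ m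
        = a m * z ^ m * ∑ j ∈ Finset.range k, (ζ ^ m) ^ j := by
      rw [Finset.mul_sum]
      refine Finset.sum_congr rfl fun j _ ↦ ?_
      ring
    rw [this, hζ.geom_sum_pow_eq_ite]
    split_ifs
    · field_simp
    · simp
  have hdvd : HasSum (fun m ↦ if k ∣ m then a m * z ^ m else 0)
      ((∑ j ∈ Finset.range k, f (ζ ^ j * z)) / k) := by
    simpa only [hterm] using
      (hasSum_sum (s := Finset.range k) fun j _ ↦ hf _ (hrot j)).div_const (k : ℂ)
  rw [← (mul_left_injective₀ hk).hasSum_iff] at hdvd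
  · simpa [Function.comp_def, pow_mul, mul_comm] using hdvd
  · rintro m hm
    rw [if_neg]
    rintro ⟨n, rfl⟩
    exact hm ⟨n, mul_comm _ _⟩

theorem norm_coeff_le_one_sub_sq_of_mapsTo_ball_one
    (hf : ∀ z ∈ ball (0 : ℂ) 1, HasSum (fun n ↦ a n * z ^ n) (f z))
    (hmaps : MapsTo f (ball 0 1) (ball 0 1)) {k : ℕ} (hk : k ≠ 0) :
    ‖a k‖ ≤ 1 - ‖a 0‖ ^ 2 := by
  have hζ := Complex.isPrimitiveRoot_exp k hk
  set ζ := Complex.exp (2 * Real.pi * Complex.I / k)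
  set H : ℂ → ℂ := fun w ↦ ∑' n, a (n * k) * w ^ n
  have hroot {w : ℂ} (hw : w ∈ ball (0 : ℂ) 1) : ∃ z ∈ ball (0 : ℂ) 1, z ^ k = w := by
    obtain ⟨z, rfl⟩ := IsAlgClosed.exists_pow_nat_eq w (Nat.pos_of_ne_zero hk)
    refine ⟨z, ?_, rfl⟩
    rw [mem_ball_zero_iff, norm_pow] at hw
    rw [mem_ball_zero_iff]
    exact (pow_lt_one_iff_of_nonneg (norm_nonneg z) hk).mp hw
  have hH : ∀ w ∈ ball (0 : ℂ) 1, HasSum (fun n ↦ a (n * k) * w ^ n) (H w) := by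
    intro w hw
    obtain ⟨z, hz, rfl⟩ := hroot hw
    exact (hasSum_average_rotations_of_isPrimitiveRoot hf hk hζ hz).summable.hasSum
  have hHmaps : MapsTo H (ball 0 1) (ball 0 1) := by
    intro w hw
    obtain ⟨z, hz, rfl⟩ := hroot hw
    rw [(hH _ hw).unique (hasSum_average_rotations_of_isPrimitiveRoot hf hk hζ hz),
      mem_ball_zero_iff, norm_div, Complex.norm_natCast,
      div_lt_one (Nat.cast_pos.mpr (Nat.pos_of_ne_zero hk))]
    calc ‖∑ j ∈ Finset.range k, f (ζ ^ j * z)‖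
        ≤ ∑ j ∈ Finset.range k, ‖f (ζ ^ j * z)‖ := norm_sum_le _ _
      _ < ∑ j ∈ Finset.range k, 1 :=
        Finset.sum_lt_sum_of_nonempty (Finset.nonempty_range_iff.mpr hk) fun j _ ↦
          mem_ball_zero_iff.mp (hmaps (by simpa [hζ.norm'_eq_one hk] using hz))
      _ = k := by simp
  have := norm_deriv_zero_le_of_mapsTo_ball_one (differentiableOn_of_hasSum hH) hHmaps
  rwa [deriv_zero_eq_of_hasSum hH, apply_zero_eq_of_hasSum hH, one_mul, zero_mul] at this

theorem tsum_norm_mul_pow_le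
    (hf : ∀ z ∈ ball (0 : ℂ) 1, HasSum (fun n ↦ a n * z ^ n) (f z))
    (hmaps : MapsTo f (ball 0 1) (ball 0 1)) {r : ℝ} (hr0 : 0 ≤ r) (hr1 : r < 1) :
    ∑' n, ‖a n‖ * r ^ n ≤ ‖a 0‖ + (1 - ‖a 0‖ ^ 2) * (r / (1 - r)) := by
  have hgeom :
      HasSum (fun n ↦ (1 - ‖a 0‖ ^ 2) * r ^ (n + 1)) ((1 - ‖a 0‖ ^ 2) * (r / (1 - r))) := by
    simpa only [← pow_succ', ← div_eq_mul_inv] using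
      ((hasSum_geometric_of_lt_one hr0 hr1).mul_left r).mul_left (1 - ‖a 0‖ ^ 2)
  have hsum := summable_norm_mul_pow_of_hasSum hf hr0 hr1
  have htail : ∑' n, ‖a (n + 1)‖ * r ^ (n + 1) ≤ (1 - ‖a 0‖ ^ 2) * (r / (1 - r)) :=
    hgeom.tsum_eq ▸ ((summable_nat_add_iff 1).mpr hsum).tsum_le_tsum
      (fun n ↦ mul_le_mul_of_nonneg_right
        (norm_coeff_le_one_sub_sq_of_mapsTo_ball_one hf hmaps n.succ_ne_zero) (by positivity))
      hgeom.summable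
  rw [hsum.tsum_eq_zero_add]
  simpa using htail

end Wiener

/-- `R_{t,p}`, the smallest positive root of `t p (1 - r)² + (1 - t)(1 - 3r)(1 + r)`. -/
noncomputable def convexBohrRadius (t p : ℝ) : ℝ :=
  if t = 3 / (p + 3) then 1 / 2
  else (1 - t + t * p - 2 * Real.sqrt ((1 - t) * (t * p + 1 - t))) / (t * p - 3 + 3 * t)

theorem quadratic_nonneg_of_le_convexBohrRadius {t p r : ℝ} (ht0 : 0 < t) (ht1 : t < 1)
    (hp0 : 0 < p) (hr0 : 0 ≤ r) (hr : r ≤ convexBohrRadius t p) :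
    0 ≤ t * p * (1 - r) ^ 2 + (1 - t) * (1 - 3 * r) * (1 + r) := by
  set B := t * p + 1 - t
  set C := t * p - 3 + 3 * t
  have hB : 0 < B := by nlinarith
  have hQ : t * p * (1 - r) ^ 2 + (1 - t) * (1 - 3 * r) * (1 + r) = C * r ^ 2 - 2 * B * r + B := by
    ring
  rw [hQ]
  unfold convexBohrRadius at hr
  split_ifs at hr with htp
  · have hC : C = 0 := by
      simp only [C]
      rw [htp]
      field_simp
      ring
    rw [hC]
    nlinarith
  · have hC : C ≠ 0 := fun hC ↦ htp <| by
      rw [eq_div_iff (by linarith)]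
      linarith
    set D := Real.sqrt ((1 - t) * B)
    have hD0 : 0 ≤ D := Real.sqrt_nonneg _
    have hD : D ^ 2 = (1 - t) * B := Real.sq_sqrt (by nlinarith)
    set R := (1 - t + t * p - 2 * D) / C
    have hCR : C * R = B - 2 * D := by
      rw [mul_div_cancel₀ _ hC]
      ring
    -- the roots are `R` and `(B + 2 D) / C`
    have hfactor : C * r ^ 2 - 2 * B * r + B = (r - R) * (C * r - B - 2 * D) := by
      apply mul_left_cancel₀ hC
      linear_combination (r * C - B - 2 * D) * hCR + 4 * hD
    have hCr : C * r ≤ B + 2 * D := by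
      rcases le_or_gt C 0 with hC0 | hC0
      · nlinarith
      · nlinarith [mul_le_mul_of_nonneg_left hr hC0.le]
    rw [hfactor]
    exact mul_nonneg_of_nonpos_of_nonpos (by linarith) (by linarith)

theorem bohr_convex_bound_le_one {t p α r : ℝ} (ht1 : t ≤ 1)
    (hα0 : 0 ≤ α) (hα1 : α ≤ 1) (hr0 : 0 ≤ r) (hr1 : r < 1)
    (hQ : 0 ≤ t * p * (1 - r) ^ 2 + (1 - t) * (1 - 3 * r) * (1 + r)) :
    t * (1 - p + p * ((α + r) / (1 + α * r))) + (1 - t) * (α + (1 - α ^ 2) * (r / (1 - r)))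
      ≤ 1 := by
  have h1r : 0 < 1 - r := by linarith
  have hαr : 0 < 1 + α * r := by positivity
  have hid : t * (1 - p + p * ((α + r) / (1 + α * r))) + (1 - t) * (α + (1 - α ^ 2) * (r / (1 - r)))
      = 1 - (1 - α) * (t * p * (1 - r) ^ 2 + (1 - t) * (1 - 3 * r) * (1 + r)
          + (1 - t) * (1 - α) * (3 + α) * r ^ 2) / ((1 + α * r) * (1 - r)) := by
    field_simp
    ring
  have hrest : 0 ≤ (1 - t) * (1 - α) * (3 + α) * r ^ 2 :=
    mul_nonneg (mul_nonneg (mul_nonneg (sub_nonneg.mpr ht1) (sub_nonneg.mpr hα1)) (by linarith))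
      (sq_nonneg r)
  rw [hid, sub_le_self_iff]
  exact div_nonneg (mul_nonneg (sub_nonneg.mpr hα1) (add_nonneg hQ hrest)) (mul_pos hαr h1r).le

/-- Convex-combination Bohr-type inequality: if f is analytic on the unit disk with
|f| < 1 and Taylor coefficients aₖ, then for 0 < t < 1 and 0 < p ≤ 1,
t|f(z)|^p + (1-t) ∑_{k≥0} |aₖ| r^k ≤ 1 for r = |z| ≤ R_{t,p}. -/
theorem bohr_convex_combination
    (f : ℂ → ℂ) (a : ℕ → ℂ)
    (hf : ∀ z ∈ Metric.ball (0 : ℂ) 1, HasSum (fun k : ℕ => a k * z ^ k) (f z))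
    (hb : ∀ z ∈ Metric.ball (0 : ℂ) 1, ‖f z‖ < 1)
    (t p : ℝ) (ht0 : 0 < t) (ht1 : t < 1) (hp0 : 0 < p) (hp1 : p ≤ 1)
    (R : ℝ)
    (hR : R = if t = 3 / (p + 3) then 1 / 2
              else (1 - t + t * p - 2 * Real.sqrt ((1 - t) * (t * p + 1 - t))) /
                   (t * p - 3 + 3 * t))
    (z : ℂ) (hz : z ∈ Metric.ball (0 : ℂ) 1)
    (r : ℝ) (hr : r = ‖z‖) (hrR : r ≤ R) :
    t * ‖f z‖ ^ p + (1 - t) * ∑' k : ℕ, ‖a k‖ * r ^ k ≤ 1 := by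
  subst hr hR
  have hz1 : ‖z‖ < 1 := mem_ball_zero_iff.mp hz
  have hmaps : MapsTo f (ball 0 1) (ball 0 1) := fun w hw ↦ mem_ball_zero_iff.mpr (hb w hw)
  have hf0 : f 0 = a 0 := apply_zero_eq_of_hasSum hf
  have ha0 : ‖a 0‖ < 1 := hf0 ▸ hb 0 (mem_ball_self one_pos)
  set M := (‖a 0‖ + ‖z‖) / (1 + ‖a 0‖ * ‖z‖)
  have hpick : ‖f z‖ ≤ M := by
    simpa only [hf0] using norm_le_of_mapsTo_ball_one (differentiableOn_of_hasSum hf) hmaps hz1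
  have hbernoulli : ‖f z‖ ^ p ≤ 1 - p + p * M :=
    calc ‖f z‖ ^ p ≤ M ^ p := Real.rpow_le_rpow (norm_nonneg _) hpick hp0.le
      _ = (1 + (M - 1)) ^ p := by ring_nf
      _ ≤ 1 + p * (M - 1) :=
        rpow_one_add_le_one_add_mul_self (by linarith [(norm_nonneg _).trans hpick]) hp0.le hp1
      _ = 1 - p + p * M := by ring
  have hQ := quadratic_nonneg_of_le_convexBohrRadius ht0 ht1 hp0 (norm_nonneg z) hrR
  calc t * ‖f z‖ ^ p + (1 - t) * ∑' k, ‖a k‖ * ‖z‖ ^ k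
      ≤ t * (1 - p + p * M) + (1 - t) * (‖a 0‖ + (1 - ‖a 0‖ ^ 2) * (‖z‖ / (1 - ‖z‖))) := by
        gcongr
        exact tsum_norm_mul_pow_le hf hmaps (norm_nonneg z) hz1
    _ ≤ 1 := bohr_convex_bound_le_one ht1.le (norm_nonneg _) ha0.le (norm_nonneg z) hz1 hQ
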